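/- Let S be an additively reduced semidomain and G a linearly ordered torsion-free abelian group. If f = ∑_{i=0}^n s_i x^{g_i} ∈ S[G] with g_0 > ⋯ > g_n, all s_i nonzero, n ≥ 1, and 2g_{n-1} > g_0 + g_n, then f is monolithic; moreover if f has more than three terms and 2g_{n-1} ≥ g_0 + g_n, then f is monolithic. -/

import Mathlib

/-- Witness that `S` is a semidomain: an injective semiring hom into an integral domain. -/
structure SemidomainWitness (S : Type*) [CommSemiring S] where
  D : Type
  [commRing : CommRing D]
  [isDomain : IsDomain D]
  emb : S →+* D
  inj : Function.Injective emb

/-- `S` is a semidomain, i.e. (isomorphic to) a subsemiring of an integral domain. -/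
def IsSemidomain (S : Type*) [CommSemiring S] : Prop := Nonempty (SemidomainWitness S)

/-- `S` is additively reduced: `0` is the only additively invertible element. -/
def AddReduced (S : Type*) [AddZeroClass S] : Prop := ∀ a b : S, a + b = 0 → a = 0

/-- `s` is an atom of the additive monoid `(S, +)` (for `S` additively reduced):
it is nonzero and cannot be written as a sum of two nonzero elements. -/
def IsAddAtom {S : Type*} [AddZeroClass S] (s : S) : Prop :=
  s ≠ 0 ∧ ∀ a b : S, s = a + b → a = 0 ∨ b = 0

/-- `S` is additively Furstenberg: every nonzero element is divisible in `(S, +)`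
by an additive atom. -/
def AddFurstenberg (S : Type*) [AddZeroClass S] : Prop :=
  ∀ s : S, s ≠ 0 → ∃ a t : S, IsAddAtom a ∧ s = a + t


section GroupAlg
variable {S : Type*} [CommSemiring S] {G : Type*} [AddCommGroup G]

/-- A monomial `s·x^g` in the group semidomain `S[G]`. -/
def IsMonomial (f : AddMonoidAlgebra S G) : Prop :=
  ∃ (g : G) (s : S), f = AddMonoidAlgebra.single g s

/-- `f` is monolithic: every factorization of `f` in `S[G]` has a monomial factor. -/
def Monolithic (f : AddMonoidAlgebra S G) : Prop :=
  f ≠ 0 ∧ ∀ p q : AddMonoidAlgebra S G, f = p * q → IsMonomial p ∨ IsMonomial q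

end GroupAlg

/-! Over an additively reduced semidomain nothing cancels in a product, so
`supp (p * q) = supp p + supp q`. If neither `p` nor `q` is a monomial, let `a' < a` and `b' < b`
be the extreme exponents of `p` and `q`. Then `a' + b` and `a + b'` are non-minimal exponents of
`f`, hence both at least `g (n - 1)`, while their sum is `(a + b) + (a' + b') = g 0 + g n`; thus
`2 • g (n - 1) ≤ g 0 + g n`. In case of equality `a' + b = a + b' = g (n - 1)`, and then every
exponent of `f` below the top one is at most `g (n - 1)`, so `f` has at most three terms. -/

open Finset
open scoped Pointwise

theorem IsSemidomain.noZeroDivisors {S : Type*} [CommSemiring S] (hS : IsSemidomain S) :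
    NoZeroDivisors S := by
  obtain ⟨⟨D, emb, inj⟩⟩ := hS
  exact inj.noZeroDivisors emb (map_zero emb) (map_mul emb)

theorem AddReduced.subsingleton_addUnits {S : Type*} [AddMonoid S] (hred : AddReduced S) :
    Subsingleton (AddUnits S) :=
  ⟨fun u v => AddUnits.ext <| by rw [hred _ _ u.val_neg, hred _ _ v.val_neg]⟩

section Sumset

variable {G : Type*} [AddCommMonoid G] [LinearOrder G] [IsOrderedCancelAddMonoid G]
  {A B : Finset G} {m u M : G}

theorem Finset.isLeast_add (hA : A.Nonempty) (hB : B.Nonempty) :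
    IsLeast ↑(A + B) (A.min' hA + B.min' hB) := by
  refine ⟨add_mem_add (min'_mem A hA) (min'_mem B hB), fun x hx => ?_⟩
  obtain ⟨a, ha, b, hb, rfl⟩ := mem_add.mp hx
  exact add_le_add (min'_le A a ha) (min'_le B b hb)

theorem Finset.isGreatest_add (hA : A.Nonempty) (hB : B.Nonempty) :
    IsGreatest ↑(A + B) (A.max' hA + B.max' hB) := by
  refine ⟨add_mem_add (max'_mem A hA) (max'_mem B hB), fun x hx => ?_⟩
  obtain ⟨a, ha, b, hb, rfl⟩ := mem_add.mp hx
  exact add_le_add (le_max' A a ha) (le_max' B b hb)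

theorem Finset.le_min'_add_max' (hA : A.Nonempty) (hB : B.Nontrivial) (hm : IsLeast ↑(A + B) m)
    (hu : u ∈ lowerBounds ↑((A + B).erase m)) :
    u ≤ A.min' hA + B.max' hB.nonempty := by
  refine hu (mem_erase.mpr ⟨ne_of_gt ?_, add_mem_add (min'_mem A hA) (max'_mem B _)⟩)
  rw [← (isLeast_add hA hB.nonempty).unique hm]
  exact add_lt_add_right (min'_lt_max'_of_card B (one_lt_card_iff_nontrivial.mpr hB)) _

theorem Finset.le_max'_add_min' (hA : A.Nontrivial) (hB : B.Nonempty) (hm : IsLeast ↑(A + B) m)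
    (hu : u ∈ lowerBounds ↑((A + B).erase m)) :
    u ≤ A.max' hA.nonempty + B.min' hB := by
  rw [add_comm] at hm hu ⊢
  exact le_min'_add_max' hB hA hm hu

theorem Finset.two_nsmul_le_add_of_mem_lowerBounds_erase (hA : A.Nontrivial)
    (hB : B.Nontrivial) (hM : M ∈ upperBounds ↑(A + B)) (hm : IsLeast ↑(A + B) m)
    (hu : u ∈ lowerBounds ↑((A + B).erase m)) : 2 • u ≤ M + m := by
  rw [← (isLeast_add hA.nonempty hB.nonempty).unique hm]
  calc 2 • u ≤ (A.min' _ + B.max' _) + (A.max' _ + B.min' _) := by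
        rw [two_nsmul]
        exact add_le_add (le_min'_add_max' hA.nonempty hB hm hu)
          (le_max'_add_min' hA hB.nonempty hm hu)
    _ = (A.max' _ + B.max' _) + (A.min' _ + B.min' _) := by abel
    _ ≤ M + (A.min' _ + B.min' _) :=
        add_le_add_left (hM (isGreatest_add hA.nonempty hB.nonempty).1) _

theorem Finset.add_subset_of_two_nsmul_eq (hA : A.Nontrivial) (hB : B.Nontrivial)
    (hM : IsGreatest ↑(A + B) M) (hm : IsLeast ↑(A + B) m)
    (hu : u ∈ lowerBounds ↑((A + B).erase m)) (h : 2 • u = M + m) :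
    A + B ⊆ {m, u, M} := by
  set a := A.max' hA.nonempty
  set a' := A.min' hA.nonempty
  set b := B.max' hB.nonempty
  set b' := B.min' hB.nonempty
  have hM' : M = a + b := hM.unique (isGreatest_add hA.nonempty hB.nonempty)
  have hm' : m = a' + b' := hm.unique (isLeast_add hA.nonempty hB.nonempty)
  have h₁ : u ≤ a' + b := le_min'_add_max' hA.nonempty hB hm hu
  have h₂ : u ≤ a + b' := le_max'_add_min' hA hB.nonempty hm hu
  have hsum : (a' + b) + (a + b') = u + u := by
    rw [← two_nsmul, h, hM', hm']; abel
  have e₁ : a' + b = u := by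
    refine le_antisymm ?_ h₁
    by_contra! hlt
    exact (add_lt_add_of_lt_of_le hlt h₂).ne' hsum
  have e₂ : a + b' = u := add_left_cancel (hsum.trans (by rw [e₁]))
  have hu' : ∀ x ∈ A + B, x < u → x = m := fun x hx hxu => by
    by_contra hxm
    exact (hu (mem_erase.mpr ⟨hxm, hx⟩)).not_gt hxu
  intro x hx
  obtain ⟨c, hc, e, he, rfl⟩ := mem_add.mp hx
  simp only [mem_insert, mem_singleton]
  rcases (hM.2 hx).eq_or_lt with hxM | hxM
  · exact .inr (.inr hxM)
  suffices c + e ≤ u from (this.lt_or_eq.imp_left (hu' _ hx)).imp_right .inl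
  rw [hM'] at hxM
  -- If `c < a`, then `c + b' < a + b' = u` forces `c + b' = m`, i.e. `c = a'`,
  -- so `c + e ≤ a' + b = u`; symmetrically if `e < b`.
  rcases lt_or_lt_of_add_lt_add hxM with hca | heb
  · have : c + b' = a' + b' := hm' ▸ hu' _ (add_mem_add hc (min'_mem B _)) (e₂ ▸ by gcongr)
    rw [add_right_cancel this, ← e₁]
    exact add_le_add_right (le_max' B e he) _
  · have : a' + e = a' + b' := hm' ▸ hu' _ (add_mem_add (min'_mem A _) he) (e₁ ▸ by gcongr)
    rw [add_left_cancel this, ← e₂]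
    exact add_le_add_left (le_max' A c hc) _

end Sumset

section Antitone

variable {G : Type*} [Preorder G] [DecidableEq G] {n : ℕ} {g : Fin (n + 1) → G}

theorem Antitone.isGreatest_image_univ (hg : Antitone g) :
    IsGreatest ↑(univ.image g) (g 0) := by
  refine ⟨mem_image_of_mem g (mem_univ 0), ?_⟩
  intro x hx
  obtain ⟨i, -, rfl⟩ := mem_image.mp hx
  exact hg (Fin.zero_le i)

theorem Antitone.isLeast_image_univ (hg : Antitone g) :
    IsLeast ↑(univ.image g) (g (Fin.last n)) := by
  refine ⟨mem_image_of_mem g (mem_univ _), ?_⟩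
  intro x hx
  obtain ⟨i, -, rfl⟩ := mem_image.mp hx
  exact hg (Fin.le_last i)

theorem Antitone.mem_lowerBounds_erase_last (hg : Antitone g) {i : Fin (n + 1)}
    (hi : n ≤ i + 1) : g i ∈ lowerBounds ↑((univ.image g).erase (g (Fin.last n))) := by
  intro x hx
  obtain ⟨hx, hx'⟩ := mem_erase.mp hx
  obtain ⟨j, -, rfl⟩ := mem_image.mp hx'
  have hj : j ≠ Fin.last n := by rintro rfl; exact hx rfl
  exact hg (Fin.le_def.mpr (by have := Fin.val_lt_last hj; omega))

end Antitone

namespace AddMonoidAlgebra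

theorem support_coeff_sum_single {S G ι : Type*} [Semiring S] [DecidableEq G] [Fintype ι]
    {g : ι → G} (hg : g.Injective) {s : ι → S} (hs : ∀ i, s i ≠ 0) :
    (∑ i, single (g i) (s i)).coeff.support = univ.image g := by
  rw [coeff_sum, Finsupp.support_sum_eq_biUnion, ← biUnion_singleton]
  · simp only [coeff_single, Finsupp.support_single _ (hs _)]
  · intro i j hij
    simpa [hs] using hg.ne hij

theorem support_coeff_mul {S G : Type*} [Semiring S] [NoZeroDivisors S] [Add G] [DecidableEq G]
    (hred : AddReduced S) (p q : AddMonoidAlgebra S G) :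
    (p * q).coeff.support = p.coeff.support + q.coeff.support := by
  have := hred.subsingleton_addUnits
  refine (support_coeff_mul_subset p q).antisymm fun x hx => ?_
  obtain ⟨c, hc, e, he, rfl⟩ := mem_add.mp hx
  rw [Finsupp.mem_support_iff] at hc he ⊢
  rw [coeff_mul, Finsupp.sum, Ne, sum_eq_zero_iff]
  intro h
  have h := h c (Finsupp.mem_support_iff.mpr hc)
  rw [Finsupp.sum, sum_eq_zero_iff] at h
  simpa [hc, he] using h e (Finsupp.mem_support_iff.mpr he)

variable {S : Type*} [CommSemiring S] {G : Type*} [AddCommGroup G]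

theorem isMonomial_of_not_nontrivial {p : AddMonoidAlgebra S G}
    (hp : ¬ p.coeff.support.Nontrivial) : IsMonomial p := by
  obtain ⟨g, s, h⟩ := Finsupp.card_support_le_one'.mp
    (not_lt.mp (one_lt_card_iff_nontrivial.not.mpr hp))
  exact ⟨g, s, coeff_injective h⟩

theorem monolithic_of_support_ne_add [DecidableEq G] [NoZeroDivisors S] (hred : AddReduced S)
    {f : AddMonoidAlgebra S G} (hf : f ≠ 0)
    (h : ∀ A B : Finset G, A.Nontrivial → B.Nontrivial → f.coeff.support ≠ A + B) :
    Monolithic f := by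
  refine ⟨hf, fun p q hpq => ?_⟩
  by_contra! hpq'
  exact h _ _ (not_imp_comm.mp isMonomial_of_not_nontrivial hpq'.1)
    (not_imp_comm.mp isMonomial_of_not_nontrivial hpq'.2) (hpq ▸ support_coeff_mul hred p q)

end AddMonoidAlgebra

open AddMonoidAlgebra

/-- If `f = ∑_{i=0}^n s_i x^{g_i}` with `g_0 > ⋯ > g_n` and all `s_i ≠ 0`, then:
(1) if `n ≥ 1` and `2g_{n-1} > g_0 + g_n` then `f` is monolithic; and
(2) if `f` has more than three terms and `2g_{n-1} ≥ g_0 + g_n` then `f` is monolithic. -/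
theorem monolithic_of_two_smul_penultimate
    {S : Type*} [CommSemiring S] {G : Type*} [AddCommGroup G] [LinearOrder G] [IsOrderedAddMonoid G]
    (hS : IsSemidomain S) (hred : AddReduced S)
    (n : ℕ) (s : Fin (n + 1) → S) (g : Fin (n + 1) → G)
    (hs : ∀ i, s i ≠ 0) (hg : StrictAnti g)
    (f : AddMonoidAlgebra S G)
    (hf : f = ∑ i, AddMonoidAlgebra.single (g i) (s i)) :
    (g ⟨0, by omega⟩ + g ⟨n, by omega⟩ < 2 • g ⟨n - 1, by omega⟩ → Monolithic f) ∧
    (3 ≤ n → g ⟨0, by omega⟩ + g ⟨n, by omega⟩ ≤ 2 • g ⟨n - 1, by omega⟩ → Monolithic f) := by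
  have := hS.noZeroDivisors
  have hsupp : f.coeff.support = univ.image g := hf ▸ support_coeff_sum_single hg.injective hs
  have hf0 : f ≠ 0 := by
    rintro rfl
    exact (univ_nonempty.image g).ne_empty hsupp.symm
  have hM := hsupp ▸ hg.antitone.isGreatest_image_univ
  have hm := hsupp ▸ hg.antitone.isLeast_image_univ
  have hu := hsupp ▸
    hg.antitone.mem_lowerBounds_erase_last (i := ⟨n - 1, by omega⟩) (by simp only; omega)
  refine ⟨fun hlt => monolithic_of_support_ne_add hred hf0 fun A B hA hB hAB => ?_,
    fun h3 hle => monolithic_of_support_ne_add hred hf0 fun A B hA hB hAB => ?_⟩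
  · rw [hAB] at hM hm hu
    exact hlt.not_ge (two_nsmul_le_add_of_mem_lowerBounds_erase hA hB hM.2 hm hu)
  · rw [hAB] at hM hm hu
    have hcard := card_le_card <| add_subset_of_two_nsmul_eq hA hB hM hm hu
      (le_antisymm (two_nsmul_le_add_of_mem_lowerBounds_erase hA hB hM.2 hm hu) hle)
    rw [← hAB, hsupp, card_image_of_injective _ hg.injective, card_univ, Fintype.card_fin]
      at hcard
    exact absurd (hcard.trans card_le_three) (by omega)
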